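/- Let d ≥ 3 and let h_0,...,h_d be nonnegative integers satisfying h_i ≥ h_{d-i} for all 0 ≤ i ≤ ⌊d/2⌋, with h_d = 0. Define f_k = Σ_{i=0}^{d} h_i * C(d-i, d-1-k) for k = 0,...,d-1. Then f_{⌊3(d-1)/4⌋} ≥ f_{⌊3(d-1)/4⌋+1} ≥ ... ≥ f_{d-1}. -/

import Mathlib

/-!
Write `f_k - f_{k+1} = ∑ h_i E(d-i)` with `E(n) = C(n, J+1) - C(n, J)` and `J = d - 2 - k`; the tail
condition on `k` is `4J + 2 ≤ d`. `E(n) ≥ 0` for `n ≥ 2J + 1` and `E(n) ≤ 0` below, and the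
negative values at `n = 2J + 1 - s` are outweighed by the values at `n ≥ 2J + 1 + s`. Pairing the terms
`i` and `d - i` with `i ≤ d/2` and writing
`h_i E(d-i) + h_{d-i} E(i) = (h_i - h_{d-i}) E(d-i) + h_{d-i} (E(d-i) + E(i))`
shows that every pair contributes nonnegatively.
-/

open Finset

def chooseDiff (n j : ℕ) : ℤ := (n.choose (j + 1) : ℤ) - n.choose j

lemma chooseDiff_nonneg {n j : ℕ} (h : 2 * j + 1 ≤ n) : 0 ≤ chooseDiff n j := by
  rcases h.eq_or_lt with rfl | h
  · simp [chooseDiff, Nat.choose_symm_half]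
  · have := Nat.choose_le_succ_of_lt_half_left (show j < n / 2 by omega)
    simp only [chooseDiff, sub_nonneg]
    exact_mod_cast this

lemma chooseDiff_nonpos {n j : ℕ} (h : n ≤ 2 * j + 1) : chooseDiff n j ≤ 0 := by
  rcases lt_or_ge n (j + 1) with hn | hn
  · simp [chooseDiff, Nat.choose_eq_zero_of_lt hn]
  · have hsymm := chooseDiff_nonneg (n := n) (j := n - (j + 1)) (by omega)
    rw [chooseDiff, Nat.choose_symm_of_eq_add (show n = n - (j + 1) + 1 + j by omega),
      Nat.choose_symm_of_eq_add (show n = n - (j + 1) + (j + 1) by omega)] at hsymm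
    simp only [chooseDiff]
    linarith

lemma chooseDiff_zero_right (n : ℕ) : chooseDiff n 0 = n - 1 := by
  simp [chooseDiff]

lemma chooseDiff_succ_succ (n j : ℕ) :
    chooseDiff (n + 1) (j + 1) = chooseDiff n (j + 1) + chooseDiff n j := by
  simp only [chooseDiff, Nat.choose_succ_succ n (j + 1), Nat.choose_succ_succ n j]
  push_cast
  ring

lemma chooseDiff_le_chooseDiff {a b j : ℕ} (ha : 2 * j ≤ a + 1) (hab : a ≤ b) :
    chooseDiff a j ≤ chooseDiff b j := by
  induction b, hab using Nat.le_induction with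
  | base => exact le_rfl
  | succ b hab ih =>
    refine ih.trans ?_
    cases j with
    | zero => simp [chooseDiff_zero_right]
    | succ j =>
      rw [chooseDiff_succ_succ]
      linarith [chooseDiff_nonneg (n := b) (j := j) (by omega)]

-- For `j + 1`, Pascal's rule makes the pair at distance `s + 1` exceed the pair at distance `s` by
-- `chooseDiff (2j+3+s) j - chooseDiff (2j+2-s) j ≥ 0`.
lemma chooseDiff_add_chooseDiff_reflect_nonneg (j s : ℕ) (hs : s ≤ 2 * j + 1) :
    0 ≤ chooseDiff (2 * j + 1 + s) j + chooseDiff (2 * j + 1 - s) j := by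
  cases j with
  | zero =>
    interval_cases s <;> simp [chooseDiff_zero_right]
  | succ j =>
    induction s with
    | zero => simp [chooseDiff_nonneg]
    | succ s ih =>
      have hupper : chooseDiff (2 * (j + 1) + 1 + (s + 1)) (j + 1) =
          chooseDiff (2 * (j + 1) + 1 + s) (j + 1) + chooseDiff (2 * (j + 1) + 1 + s) j :=
        chooseDiff_succ_succ _ _
      have hlower : chooseDiff (2 * (j + 1) + 1 - s) (j + 1) =
          chooseDiff (2 * (j + 1) + 1 - (s + 1)) (j + 1) +
            chooseDiff (2 * (j + 1) + 1 - (s + 1)) j := by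
        rw [← chooseDiff_succ_succ]
        congr 1
        omega
      have hstep : chooseDiff (2 * (j + 1) + 1 - (s + 1)) j ≤
          chooseDiff (2 * (j + 1) + 1 + s) j := by
        rcases le_or_gt (2 * (j + 1) + 1 - (s + 1)) (2 * j + 1) with hm | hm
        · linarith [chooseDiff_nonpos hm, chooseDiff_nonneg (n := 2 * (j + 1) + 1 + s) (j := j)
            (by omega)]
        · exact chooseDiff_le_chooseDiff (by omega) (by omega)
      linarith [ih (by omega)]

lemma chooseDiff_add_chooseDiff_nonneg {m n j : ℕ} (hmn : m ≤ n) (hsum : 4 * j + 2 ≤ m + n) :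
    0 ≤ chooseDiff n j + chooseDiff m j := by
  rcases le_or_gt (2 * j + 1) m with hm | hm
  · linarith [chooseDiff_nonneg hm, chooseDiff_nonneg (hm.trans hmn)]
  · obtain ⟨s, hs, rfl⟩ : ∃ s ≤ 2 * j + 1, m = 2 * j + 1 - s := ⟨2 * j + 1 - m, by omega, by omega⟩
    have hn : chooseDiff (2 * j + 1 + s) j ≤ chooseDiff n j :=
      chooseDiff_le_chooseDiff (by omega) (by omega)
    linarith [chooseDiff_add_chooseDiff_reflect_nonneg j s hs]

lemma mul_add_mul_nonneg_of_le {R : Type*} [CommRing R] [PartialOrder R] [IsOrderedRing R]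
    {a b x y : R} (hba : b ≤ a) (hb : 0 ≤ b) (hx : 0 ≤ x) (hxy : 0 ≤ x + y) :
    0 ≤ a * x + b * y := by
  have : a * x + b * y = (a - b) * x + b * (x + y) := by ring
  rw [this]
  exact add_nonneg (mul_nonneg (sub_nonneg.2 hba) hx) (mul_nonneg hb hxy)

section Pairing

variable {d j : ℕ} {h : ℕ → ℕ}

lemma pair_mul_chooseDiff_nonneg (hsym : ∀ i, i ≤ d / 2 → h (d - i) ≤ h i)
    (hj : 4 * j + 2 ≤ d) {i : ℕ} (hi : 2 * i ≤ d) :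
    0 ≤ (h i : ℤ) * chooseDiff (d - i) j + (h (d - i) : ℤ) * chooseDiff i j :=
  mul_add_mul_nonneg_of_le (by exact_mod_cast hsym i (by omega)) (by positivity)
    (chooseDiff_nonneg (by omega)) (chooseDiff_add_chooseDiff_nonneg (by omega) (by omega))

lemma sum_mul_chooseDiff_nonneg (hsym : ∀ i, i ≤ d / 2 → h (d - i) ≤ h i)
    (hj : 4 * j + 2 ≤ d) :
    0 ≤ ∑ i ∈ range (d + 1), (h i : ℤ) * chooseDiff (d - i) j := by
  set S := ∑ i ∈ range (d + 1), (h i : ℤ) * chooseDiff (d - i) j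
  have hreflect : ∑ i ∈ range (d + 1), (h (d - i) : ℤ) * chooseDiff i j = S := by
    rw [← sum_range_reflect]
    refine sum_congr rfl fun i hi => ?_
    have hid := mem_range.1 hi
    rw [show d + 1 - 1 - i = d - i by omega, show d - (d - i) = i by omega]
  have hpairs : 0 ≤ ∑ i ∈ range (d + 1),
      ((h i : ℤ) * chooseDiff (d - i) j + (h (d - i) : ℤ) * chooseDiff i j) := by
    refine sum_nonneg fun i hi => ?_
    have hid := mem_range.1 hi
    rcases le_or_gt (2 * i) d with hi' | hi'
    · exact pair_mul_chooseDiff_nonneg hsym hj hi'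
    · have := pair_mul_chooseDiff_nonneg hsym hj (i := d - i) (by omega)
      rwa [show d - (d - i) = i by omega, add_comm] at this
  rw [sum_add_distrib, hreflect] at hpairs
  linarith

end Pairing

theorem stmt5_general (d : ℕ) (h : ℕ → ℕ)
    (hsym : ∀ i, i ≤ d / 2 → h (d - i) ≤ h i)
    (f : ℕ → ℕ)
    (hf : ∀ k, f k = ∑ i ∈ Finset.range (d + 1), h i * Nat.choose (d - i) (d - 1 - k)) :
    ∀ k, 3 * (d - 1) / 4 ≤ k → k + 1 ≤ d - 1 → f (k + 1) ≤ f k := by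
  intro k hk hkd
  have hdiff : (f k : ℤ) - f (k + 1) =
      ∑ i ∈ range (d + 1), (h i : ℤ) * chooseDiff (d - i) (d - 2 - k) := by
    rw [hf, hf, show d - 1 - k = d - 2 - k + 1 by omega, show d - 1 - (k + 1) = d - 2 - k by omega]
    push_cast
    rw [← sum_sub_distrib]
    exact sum_congr rfl fun i _ => by rw [chooseDiff]; ring
  have := sum_mul_chooseDiff_nonneg hsym (j := d - 2 - k) (by omega)
  omega

theorem stmt5 (d : ℕ) (hd : 3 ≤ d) (h : ℕ → ℕ)
    (hsym : ∀ i, i ≤ d / 2 → h (d - i) ≤ h i) (hdz : h d = 0)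
    (f : ℕ → ℕ)
    (hf : ∀ k, f k = ∑ i ∈ Finset.range (d + 1), h i * Nat.choose (d - i) (d - 1 - k)) :
    ∀ k, 3 * (d - 1) / 4 ≤ k → k + 1 ≤ d - 1 → f (k + 1) ≤ f k :=
  stmt5_general d h hsym f hf
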